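/- Let b = 0 or 1 and let S, T ∈ A^b_G with T ⊆ S. Then for every O_S ∈ O^b(G − S) there exists O_T ∈ O^b(G − T) whose restriction to G − S equals O_S. Moreover, if O_S ∼ O'_S for some O'_S ∈ O^b(G − S), there exists O'_T ∈ O^b(G − T) whose restriction to G − S equals O'_S and with O'_T ∼ O_T. -/

import Mathlib

/-!
Common framework: finite vertex-weighted multigraphs (loops and multiple edges
allowed), generalized orientations, divisors, contractions, and poset gadgets.

A graph is encoded by a finite set `V ⊆ ℕ` of vertices, a finite set `E ⊆ ℕ`
of edges, an "ends" function assigning to each edge its ordered pair of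
end-vertices (the two components encode the two half-edges), and a weight
function `w : ℕ → ℕ`.

A generalized orientation is a function `ℕ → Option EdgeDir`, where `none`
means the edge is absent (an orientation on a spanning subgraph `G − S` takes
the value `none` exactly on edges outside `E \ S`), `fwd`/`bwd` give the edge a
single direction, and `bi` makes the edge bioriented.
-/

open scoped Classical
open Finset

/-- Direction of an edge under a generalized orientation. -/
inductive EdgeDir : Type
  | fwd
  | bwd
  | bi
deriving DecidableEq

/-- Generalized orientation data. -/
abbrev Orient : Type := ℕ → Option EdgeDir

/-- The number of ending (target) half-edges at the vertex `v` of an edge with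
end-pair `p`, given its direction `d`.  A one-way oriented edge has exactly
one target end; a bioriented edge has both ends as targets. -/
def dirT : Option EdgeDir → ℕ × ℕ → ℕ → ℕ
  | none, _, _ => 0
  | some EdgeDir.fwd, p, v => if p.2 = v then 1 else 0
  | some EdgeDir.bwd, p, v => if p.1 = v then 1 else 0
  | some EdgeDir.bi, p, v => (if p.1 = v then 1 else 0) + (if p.2 = v then 1 else 0)

/-- Restriction of orientation data to the set `D` of kept edges. -/
def restr (O : Orient) (D : Finset ℕ) : Orient := fun e => if e ∈ D then O e else none

/-- A finite vertex-weighted multigraph. -/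
structure WGraph : Type where
  V : Finset ℕ
  E : Finset ℕ
  ends : ℕ → ℕ × ℕ
  w : ℕ → ℕ
  ends_mem : ∀ e ∈ E, (ends e).1 ∈ V ∧ (ends e).2 ∈ V

namespace WGraph

variable (G : WGraph)

/-- Edge set of the induced subgraph `(G−S)[Z]`: edges of `G − S` with both
ends in `Z`. -/
def indEdges (S Z : Finset ℕ) : Finset ℕ :=
  (G.E \ S).filter fun e => (G.ends e).1 ∈ Z ∧ (G.ends e).2 ∈ Z

/-- The cut `E(Z, Zᶜ)` in `G − S`: edges of `G − S` with exactly one end in `Z`. -/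
def cutEdges (S Z : Finset ℕ) : Finset ℕ :=
  (G.E \ S).filter fun e =>
    ((G.ends e).1 ∈ Z ∧ (G.ends e).2 ∉ Z) ∨ ((G.ends e).1 ∉ Z ∧ (G.ends e).2 ∈ Z)

/-- Adjacency via an edge belonging to `F ∩ E`. -/
def adjOn (F : Finset ℕ) (u v : ℕ) : Prop :=
  ∃ e ∈ F ∩ G.E, G.ends e = (u, v) ∨ G.ends e = (v, u)

/-- Number of connected components of the subgraph with vertex set `W` and
edge set `F`. -/
noncomputable def ncomp (W F : Finset ℕ) : ℕ :=
  Nat.card (Quot (fun u v : {x : ℕ // x ∈ W} => G.adjOn F u.1 v.1))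

/-- The subgraph with vertex set `W` and edge set `F` is connected. -/
def ConnSub (W F : Finset ℕ) : Prop := G.ncomp W F = 1

/-- `G` is connected. -/
def Connected : Prop := G.ConnSub G.V G.E

/-- Genus of the subgraph with vertex set `W` and edge set `F`:
`∑_{v ∈ W} w(v) − |W| + |F| + c`. -/
noncomputable def subGenus (W F : Finset ℕ) : ℤ :=
  (∑ v ∈ W, (G.w v : ℤ)) - (W.card : ℤ) + (((F ∩ G.E).card : ℤ)) + (G.ncomp W F : ℤ)

/-- The genus of `G`. -/
noncomputable def genus : ℤ := G.subGenus G.V G.E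

/-- The degree of a vertex: the number of half-edges having `v` as end. -/
def deg (v : ℕ) : ℕ :=
  ∑ e ∈ G.E, ((if (G.ends e).1 = v then 1 else 0) + (if (G.ends e).2 = v then 1 else 0))

/-- `e` is a bridge of `G − S`: removing it increases the number of connected
components. -/
def IsBridge (S : Finset ℕ) (e : ℕ) : Prop :=
  e ∈ G.E \ S ∧ G.ncomp G.V (G.E \ S) < G.ncomp G.V (G.E \ insert e S)

/-- The set of bridges of `G − S`. -/
noncomputable def bridges (S : Finset ℕ) : Finset ℕ := (G.E \ S).filter (G.IsBridge S)

/-- `T` is a cut of `G`, i.e. `T = E(Z, Zᶜ)` for some `∅ ⊊ Z ⊊ V`. -/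
def IsCut (T : Finset ℕ) : Prop :=
  ∃ Z, Z ⊆ G.V ∧ Z.Nonempty ∧ Z ≠ G.V ∧ T = G.cutEdges ∅ Z

/-- `W` is (the vertex set of) a connected component of `G − S`. -/
def IsCompOf (S W : Finset ℕ) : Prop :=
  W ⊆ G.V ∧ W.Nonempty ∧ G.ConnSub W (G.indEdges S W) ∧ G.cutEdges S W = ∅

/-- The poset `A^b_G`: for `b = 0` the sets `S ⊆ E` with `G − S` bridgeless,
for `b = 1` the sets `S ⊆ E` with `G − S` connected. -/
def Ab (b : ℕ) (S : Finset ℕ) : Prop :=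
  S ⊆ G.E ∧ ((b = 0 ∧ ∀ e, ¬ G.IsBridge S e) ∨ (b = 1 ∧ G.ConnSub G.V (G.E \ S)))

/-- `G` is a stable graph of genus `g`: connected, of genus `g`, and every
vertex of weight `0` has degree at least `3`. -/
noncomputable def Stable (g : ℕ) : Prop :=
  G.Connected ∧ G.genus = (g : ℤ) ∧ ∀ v ∈ G.V, G.w v = 0 → 3 ≤ G.deg v

/-! ### Generalized orientations on spanning subgraphs -/

/-- `O` is orientation data for the spanning subgraph `G − S` (it is defined
exactly on the edges of `G − S`). -/
def IsOrientOn (S : Finset ℕ) (O : Orient) : Prop :=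
  ∀ e, O e ≠ none ↔ e ∈ G.E \ S

/-- The set of bioriented edges of `O`. -/
def biE (O : Orient) : Finset ℕ := G.E.filter fun e => O e = some EdgeDir.bi

/-- `t^O_v`: the number of half-edges having `v` as target. -/
def tOr (O : Orient) (v : ℕ) : ℕ := ∑ e ∈ G.E, dirT (O e) (G.ends e) v

/-- `t^O(Z)`: the number of edges of `G − S` not contained in `(G−S)[Z]`
having a target in `Z`. -/
def tCut (S : Finset ℕ) (O : Orient) (Z : Finset ℕ) : ℕ :=
  ∑ e ∈ (G.E \ S) \ G.indEdges S Z, ∑ v ∈ Z, dirT (O e) (G.ends e) v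

/-- The divisor `d^O` of a `b`-orientation `O` on `G − S`:
`d^O_v = w(v) − 1 + t^O_v` if `G − S` has edges, and `d^O_v = w(v) − 1 + b`
otherwise; it is supported on `V`. -/
noncomputable def divOr (S : Finset ℕ) (b : ℕ) (O : Orient) : ℕ → ℤ :=
  fun v => if v ∈ G.V then
      (if G.E \ S = ∅ then (G.w v : ℤ) - 1 + (b : ℤ) else (G.w v : ℤ) - 1 + (G.tOr O v : ℤ))
    else 0

/-- Equivalence of generalized orientations on `G − S`:  both are orientations
on `G − S` and they have the same divisor. -/
noncomputable def equivOr (S : Finset ℕ) (b : ℕ) (O O' : Orient) : Prop :=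
  G.IsOrientOn S O ∧ G.IsOrientOn S O' ∧ G.divOr S b O = G.divOr S b O'

/-- `O` is a totally cyclic orientation on `G − S`: every nonempty cut
`E(Z,Zᶜ)` contains an edge with target in `Z` and an edge with target in `Zᶜ`. -/
def TotCyc (S : Finset ℕ) (O : Orient) : Prop :=
  ∀ Z : Finset ℕ, Z ⊆ G.V → Z.Nonempty → Z ≠ G.V → (G.cutEdges S Z).Nonempty →
    (∃ e ∈ G.cutEdges S Z, ∃ v ∈ Z, 0 < dirT (O e) (G.ends e) v) ∧
    (∃ e ∈ G.cutEdges S Z, ∃ v ∈ G.V \ Z, 0 < dirT (O e) (G.ends e) v)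

/-- `O` is `e₀`-rooted on `G − S`: for every `Z ⊊ V` with `e₀` an edge of
`(G−S)[Z]`, the cut `E(Z,Zᶜ)` contains an edge with target in `Zᶜ`. -/
def RootedAt (S : Finset ℕ) (O : Orient) (e₀ : ℕ) : Prop :=
  ∀ Z : Finset ℕ, Z ⊆ G.V → Z ≠ G.V → e₀ ∈ G.indEdges S Z →
    ∃ e ∈ G.cutEdges S Z, ∃ v ∈ G.V \ Z, 0 < dirT (O e) (G.ends e) v

/-- `O` is a rooted `1`-orientation on `G − S`:  it has exactly one bioriented
edge, at which it is rooted.  By convention, if `G − S` consists of a single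
vertex (and no edges), the empty orientation is rooted. -/
def Rooted1 (S : Finset ℕ) (O : Orient) : Prop :=
  (∃ e₀, G.biE O = {e₀} ∧ G.RootedAt S O e₀) ∨ (G.E \ S = ∅ ∧ G.V.card = 1)

/-- `O ∈ 𝒪^b(G−S)`:  for `b = 0`, a totally cyclic orientation on `G − S`;
for `b = 1`, a rooted `1`-orientation on `G − S`. -/
def MemOb (S : Finset ℕ) (b : ℕ) (O : Orient) : Prop :=
  G.IsOrientOn S O ∧
    ((b = 0 ∧ G.biE O = ∅ ∧ G.TotCyc S O) ∨ (b = 1 ∧ G.Rooted1 S O))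

/-- `O` is a `b`-orientation on `G − S` (exactly `b` bioriented edges; by
convention the empty orientation on a one-vertex edgeless graph counts as a
`1`-orientation). -/
def IsbOr (S : Finset ℕ) (b : ℕ) (O : Orient) : Prop :=
  G.IsOrientOn S O ∧
    ((G.biE O).card = b ∨ (G.E \ S = ∅ ∧ G.V.card = 1 ∧ b = 1))

/-! ### Posets of orientations on spanning subgraphs -/

/-- The order of `𝒪𝒫^b_G` on pairs `(S, O_S)`:  `(S,O_S) ≤ (T,O_T)` iff
`T ⊆ S` and the restriction of `O_T` to `G − S` is `O_S`. -/
def leOP (p q : Finset ℕ × Orient) : Prop :=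
  q.1 ⊆ p.1 ∧ restr q.2 (G.E \ p.1) = p.2

/-- The order of `𝒪̄𝒫^b_G` on pairs (representing classes): `(S,O̅_S) ≤ (T,O̅_T)`
iff `T ⊆ S` and some representative of `O̅_T` restricts on `G − S` to some
representative of `O̅_S`. -/
noncomputable def leOPbar (b : ℕ) (p q : Finset ℕ × Orient) : Prop :=
  q.1 ⊆ p.1 ∧ ∃ O', G.equivOr q.1 b O' q.2 ∧
    G.equivOr p.1 b (restr O' (G.E \ p.1)) p.2

/-- Equality in `𝒪̄𝒫^b_G`: same subgraph and equivalent orientations. -/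
noncomputable def eqOP (b : ℕ) (p q : Finset ℕ × Orient) : Prop :=
  p.1 = q.1 ∧ G.equivOr p.1 b p.2 q.2

/-- Membership in `𝒪𝒫^b_G`. -/
def POb (b : ℕ) (p : Finset ℕ × Orient) : Prop :=
  G.Ab b p.1 ∧ G.MemOb p.1 b p.2

/-! ### Stable divisors -/

/-- Stable divisors on `G − S` of degree `g(G−S) − c(G−S) + b` (`b = 0, 1`):
for `b = 1`, `G − S` is connected, the degree is `g(G−S)` and
`|d_Z| > g(Z) − 1` for every `Z ⊆ V`; for `b = 0`, the restriction of `d` to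
every connected component `W` of `G − S` has degree `g(W) − 1` and satisfies
`|d_Z| > g(Z) − 1` for every `∅ ≠ Z ⊊ W`. -/
noncomputable def StableDiv (S : Finset ℕ) (b : ℕ) (d : ℕ → ℤ) : Prop :=
  (∀ v, v ∉ G.V → d v = 0) ∧
  ((b = 1 ∧ G.ConnSub G.V (G.E \ S) ∧
      (∑ v ∈ G.V, d v) = G.subGenus G.V (G.E \ S) ∧
      ∀ Z ⊆ G.V, G.subGenus Z (G.indEdges S Z) - 1 < ∑ v ∈ Z, d v) ∨
   (b = 0 ∧ ∀ W, G.IsCompOf S W →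
      (∑ v ∈ W, d v) = G.subGenus W (G.indEdges S W) - 1 ∧
      ∀ Z ⊆ W, Z.Nonempty → Z ≠ W →
        G.subGenus Z (G.indEdges S Z) - 1 < ∑ v ∈ Z, d v))

/-! ### Contractions -/

/-- The relation identifying the two ends of each edge in `S₀`. -/
def conRel (S₀ : Finset ℕ) (u v : ℕ) : Prop :=
  ∃ e ∈ S₀ ∩ G.E, G.ends e = (u, v) ∨ G.ends e = (v, u)

/-- Representative (the least element) of the class of `v` under the
equivalence generated by identifying the ends of the edges in `S₀`. -/
noncomputable def crep (S₀ : Finset ℕ) (v : ℕ) : ℕ :=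
  sInf {u | Relation.EqvGen (G.conRel S₀) u v}

/-- The (weighted) edge contraction `G/S₀`: every connected component of the
subgraph spanned by `S₀` is contracted to a single vertex, whose weight is the
genus of that component; `E(G/S₀) = E(G) \ S₀`. -/
noncomputable def contract (S₀ : Finset ℕ) : WGraph where
  V := G.V.image (G.crep S₀)
  E := G.E \ S₀
  ends := fun e => (G.crep S₀ (G.ends e).1, G.crep S₀ (G.ends e).2)
  w := fun v =>
    (G.subGenus (G.V.filter fun u => G.crep S₀ u = v)
      (G.indEdges (G.E \ S₀) (G.V.filter fun u => G.crep S₀ u = v))).toNat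
  ends_mem := by
    intro e he
    rw [Finset.mem_sdiff] at he
    exact ⟨Finset.mem_image_of_mem _ (G.ends_mem e he.1).1,
           Finset.mem_image_of_mem _ (G.ends_mem e he.1).2⟩

/-- Deletion of the edges in `T` (a spanning subgraph, as a graph). -/
def ddel (T : Finset ℕ) : WGraph where
  V := G.V
  E := G.E \ T
  ends := G.ends
  w := G.w
  ends_mem := fun e he => G.ends_mem e (Finset.mem_sdiff.mp he).1

/-- Pullback `γ* T` of an edge set along the contraction `γ : G → G/S₀`:
`T ∪ (G−T)_br` for `b = 0`, and `T` for `b = 1`. -/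
noncomputable def pullStar (b : ℕ) (T : Finset ℕ) : Finset ℕ :=
  if b = 0 then T ∪ G.bridges T else T

/-- Pushforward of a divisor along the contraction `γ : G → G/S₀`:
`(γ_* d)_v = ∑_{z ∈ γ⁻¹(v)} d_z`. -/
noncomputable def pushDiv (S₀ : Finset ℕ) (d : ℕ → ℤ) : ℕ → ℤ :=
  fun v => ∑ z ∈ G.V.filter (fun u => G.crep S₀ u = v), d z

/-- The divisor `c^{γ,S}` on `G/S₀`: `c^{γ,S}_v = #{e ∈ S₀ ∩ S : γ(e) = v}`. -/
noncomputable def cGamma (S₀ S : Finset ℕ) : ℕ → ℤ :=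
  fun v => ((((S₀ ∩ S) ∩ G.E).filter (fun e => G.crep S₀ (G.ends e).1 = v)).card : ℤ)

/-- The relation "`q` is a value of `γ̄_*` at `p`" for the contraction
`γ : G → G/S₀` acting on classes of orientations: `q` is the restriction to
`(G/S₀) − γ_* S` of a representative of the class of `p` having no bioriented
edge in `S₀` (when `(G/S₀) − γ_*S` has no edges, any representative serves). -/
noncomputable def pushRel (S₀ : Finset ℕ) (b : ℕ) (p q : Finset ℕ × Orient) : Prop :=
  ∃ O', G.equivOr p.1 b O' p.2 ∧
    ((∀ e ∈ S₀, O' e ≠ some EdgeDir.bi) ∨ G.E \ (S₀ ∪ p.1) = ∅) ∧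
    q.1 = p.1 \ S₀ ∧ q.2 = restr O' (G.E \ (S₀ ∪ p.1))

/-! ### Isomorphisms and directed reachability -/

/-- `(fV, fE)` is an isomorphism from `G` to `H`. -/
def IsoMaps (H : WGraph) (fV fE : ℕ → ℕ) : Prop :=
  Set.BijOn fV ↑G.V ↑H.V ∧ Set.BijOn fE ↑G.E ↑H.E ∧
  (∀ e ∈ G.E, H.ends (fE e) = (fV (G.ends e).1, fV (G.ends e).2) ∨
              H.ends (fE e) = (fV (G.ends e).2, fV (G.ends e).1)) ∧
  (∀ v ∈ G.V, H.w (fV v) = G.w v)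

/-- `G` and `H` are isomorphic graphs. -/
def Iso (H : WGraph) : Prop := ∃ fV fE, G.IsoMaps H fV fE

/-- The edge-contraction relation: `G ≤ H` iff `H = G/S₀` (up to isomorphism)
for some `S₀ ⊆ E(G)`. -/
noncomputable def contractLE (H : WGraph) : Prop :=
  ∃ S₀ ⊆ G.E, (G.contract S₀).Iso H

/-- One step from `u` to `v` along an `O`-directed edge (a bioriented edge may
be traversed in both directions). -/
def dirStep (O : Orient) (u v : ℕ) : Prop :=
  ∃ e ∈ G.E,
    (O e = some EdgeDir.fwd ∧ G.ends e = (u, v)) ∨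
    (O e = some EdgeDir.bwd ∧ G.ends e = (v, u)) ∨
    (O e = some EdgeDir.bi ∧ (G.ends e = (u, v) ∨ G.ends e = (v, u)))

/-- There is an `O`-directed path from the (bioriented) edge `e` to the
vertex `v`: a directed path starting at one of the ends of `e` and ending
at `v`. -/
def dirReachFromEdge (O : Orient) (e v : ℕ) : Prop :=
  ∃ u, ((G.ends e).1 = u ∨ (G.ends e).2 = u) ∧
    Relation.ReflTransGen (G.dirStep O) u v

end WGraph

/-! ### Generic poset gadgets (for sets with an order, modulo an equivalence) -/

/-- `le` is a partial order on `{a | P a}` modulo the identification `eqv`. -/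
def IsPartialOrderOnMod {α : Type*} (P : α → Prop) (eqv le : α → α → Prop) : Prop :=
  (∀ a, P a → le a a) ∧
  (∀ a b c, P a → P b → P c → le a b → le b c → le a c) ∧
  (∀ a b, P a → P b → le a b → le b a → eqv a b)

/-- `le` is a partial order on `{a | P a}`. -/
def IsPartialOrderOn {α : Type*} (P : α → Prop) (le : α → α → Prop) : Prop :=
  IsPartialOrderOnMod P (· = ·) le

/-- `a'` covers `a` in `{a | P a}` ordered by `le`, modulo `eqv`. -/
def CoversOnMod {α : Type*} (P : α → Prop) (eqv le : α → α → Prop) (a a' : α) : Prop :=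
  P a ∧ P a' ∧ le a a' ∧ ¬ eqv a a' ∧
    ∀ c, P c → le a c → le c a' → (eqv c a ∨ eqv c a')

/-- `ρ` is a rank on `{a | P a}` ordered by `le`, modulo `eqv`:  along every
covering relation it increases by exactly `1`. -/
def IsRankOnMod {α : Type*} (P : α → Prop) (eqv le : α → α → Prop) (ρ : α → ℕ) : Prop :=
  ∀ a a', CoversOnMod P eqv le a a' → ρ a' = ρ a + 1

/-- `a'` covers `a` in `{a | P a}` ordered by `le`. -/
def CoversOn {α : Type*} (P : α → Prop) (le : α → α → Prop) : α → α → Prop :=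
  CoversOnMod P (· = ·) le

/-- `ρ` is a rank on `{a | P a}` ordered by `le`. -/
def IsRankOn {α : Type*} (P : α → Prop) (le : α → α → Prop) (ρ : α → ℕ) : Prop :=
  IsRankOnMod P (· = ·) le ρ

/-- `f` is a quotient of posets from `({a | P a}, lea)` onto `({b | Q b}, leb)`:
an order-preserving surjection such that any relation downstairs lifts to a
relation upstairs. -/
def IsPosetQuotient {α β : Type*} (P : α → Prop) (Q : β → Prop)
    (lea : α → α → Prop) (leb : β → β → Prop) (f : α → β) : Prop :=
  (∀ a, P a → Q (f a)) ∧
  (∀ a a', P a → P a' → lea a a' → leb (f a) (f a')) ∧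
  (∀ b, Q b → ∃ a, P a ∧ f a = b) ∧
  (∀ b b', Q b → Q b' → leb b b' →
    ∃ a a', P a ∧ P a' ∧ f a = b ∧ f a' = b' ∧ lea a a')

/-! ### Structures over the moduli of stable graphs -/

/-- Pairs `(G, S)` with `G` stable of genus `g` and `S ∈ A^b_G`. -/
noncomputable def PairStab (g b : ℕ) (p : WGraph × Finset ℕ) : Prop :=
  p.1.Stable g ∧ p.1.Ab b p.2

/-- Isomorphism of pairs `(G, S)`. -/
def PairIso (p q : WGraph × Finset ℕ) : Prop :=
  ∃ fV fE, p.1.IsoMaps q.1 fV fE ∧ p.2.image fE = q.2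

/-- The order on `A^b_g`: `(G,S) ≤ (H,T)` iff there is a contraction
`γ : G → H` (a contraction of `G` followed by an isomorphism onto `H`) with
`γ* T ⊆ S`. -/
noncomputable def AgLE (b : ℕ) (p q : WGraph × Finset ℕ) : Prop :=
  ∃ S₀ ⊆ p.1.E, ∃ fV fE, (p.1.contract S₀).IsoMaps q.1 fV fE ∧
    p.1.pullStar b (((p.1.contract S₀).E).filter fun e => fE e ∈ q.2) ⊆ p.2

/-- Triples `(G, S, O̅_S)` with `G` stable of genus `g`, `S ∈ A^b_G` and
`O_S ∈ 𝒪^b(G−S)` (representing elements of `𝒪̄𝒫^b_g`). -/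
noncomputable def TripP (g b : ℕ) (x : WGraph × Finset ℕ × Orient) : Prop :=
  x.1.Stable g ∧ x.1.Ab b x.2.1 ∧ x.1.MemOb x.2.1 b x.2.2

/-- Identification of triples: an isomorphism of the underlying graphs
carrying the subgraph and the class of the orientation (i.e. its divisor) of
one to the other. -/
noncomputable def TripEq (b : ℕ) (x y : WGraph × Finset ℕ × Orient) : Prop :=
  ∃ fV fE, x.1.IsoMaps y.1 fV fE ∧ x.2.1.image fE = y.2.1 ∧
    ∀ v ∈ x.1.V, y.1.divOr y.2.1 b y.2.2 (fV v) = x.1.divOr x.2.1 b x.2.2 v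

/-- The order on `𝒪̄𝒫^b_g`: `(G, O̅_S) ≤ (H, O̅_T)` iff there is a contraction
`γ : G → H` with `γ* T ⊆ S` and `γ̄_* O̅_S ≤ O̅_T`, the latter meaning that the
restriction of `O̅_T` to `H − γ_* S` equals `γ̄_* O̅_S` (compared through the
isomorphism, via the divisors). -/
noncomputable def OPgLE (b : ℕ) (x y : WGraph × Finset ℕ × Orient) : Prop :=
  ∃ S₀ ⊆ x.1.E, ∃ fV fE, (x.1.contract S₀).IsoMaps y.1 fV fE ∧
    x.1.pullStar b (((x.1.contract S₀).E).filter fun e => fE e ∈ y.2.1) ⊆ x.2.1 ∧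
    ∃ O', x.1.equivOr x.2.1 b O' x.2.2 ∧
      ((∀ e ∈ S₀, O' e ≠ some EdgeDir.bi) ∨ x.1.E \ (S₀ ∪ x.2.1) = ∅) ∧
      ∀ v ∈ (x.1.contract S₀).V,
        y.1.divOr ((x.2.1 \ S₀).image fE) b
            (restr y.2.2 (y.1.E \ (x.2.1 \ S₀).image fE)) (fV v)
          = (x.1.contract S₀).divOr (x.2.1 \ S₀) b
              (restr O' (x.1.E \ (S₀ ∪ x.2.1))) v

/-! For `b = 1`, the root edge of `O_S` lies in `G − S`, so every cut that rootedness asks to be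
witnessed in `G − T` is already witnessed by `O_S` in `G − S`: the new edges may be oriented
one-way arbitrarily (if `G − S` is a single vertex without edges, one of them is bioriented).

For `b = 0`, an edge `e ∈ S \ T` is not a bridge of `G − T`, so it lies on a closed trail of
`G − T`. Orient the edges of `S` on that trail along it: a cut that is empty in `G − S` but met
by the trail is then crossed by it in both directions, and we repeat with fewer edges left in
`S \ T`.

In both cases the orientation `σ` put on `S \ T` depends only on `S` and `T`; since
`t^{O ∪ σ} = t^O + t^σ`, the extension `O ↦ O ∪ σ` (`extendBy O σ`) preserves equivalence. -/

def extendBy (O σ : Orient) : Orient := fun f => (O f).or (σ f)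

lemma extendBy_assoc (O σ τ : Orient) :
    extendBy (extendBy O σ) τ = extendBy O (extendBy σ τ) :=
  funext fun _ => Option.or_assoc

def orientAlong (M : List (ℕ × Bool)) : Orient := fun f =>
  if (f, true) ∈ M then some EdgeDir.fwd else if (f, false) ∈ M then some EdgeDir.bwd else none

def dartDir (d : Bool) : EdgeDir := if d then EdgeDir.fwd else EdgeDir.bwd

lemma orientAlong_of_mem {M : List (ℕ × Bool)} (hnd : (M.map Prod.fst).Nodup) {q : ℕ × Bool}
    (hq : q ∈ M) : orientAlong M q.1 = some (dartDir q.2) := by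
  obtain ⟨f, _ | _⟩ := q
  · have hnot : (f, true) ∉ M := fun ht =>
      Bool.false_ne_true (congrArg Prod.snd (List.inj_on_of_nodup_map hnd hq ht rfl))
    simp [orientAlong, dartDir, hq, hnot]
  · simp [orientAlong, dartDir, hq]

namespace WGraph

variable (G : WGraph)

section Components

instance (F : Finset ℕ) : Std.Symm (G.adjOn F) where
  symm _ _ := fun ⟨e, he, h⟩ => ⟨e, he, h.symm⟩

lemma reflTransGen_of_eqvGen {W F : Finset ℕ} {x y : {v : ℕ // v ∈ W}}
    (h : Relation.EqvGen (fun u v : {v : ℕ // v ∈ W} => G.adjOn F u.1 v.1) x y) :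
    Relation.ReflTransGen (G.adjOn F) x.1 y.1 := by
  induction h with
  | rel _ _ h => exact .single h
  | refl => exact .refl
  | symm _ _ _ ih => exact Std.Symm.symm _ _ ih
  | trans _ _ _ _ _ ih₁ ih₂ => exact ih₁.trans ih₂

variable {G} in
lemma adjOn_mono {F F' : Finset ℕ} (h : F ⊆ F') {u v : ℕ} : G.adjOn F u v → G.adjOn F' u v :=
  fun ⟨e, he, hends⟩ => ⟨e, inter_subset_inter_right h he, hends⟩

lemma surjective_quotMap_of_subset (W : Finset ℕ) {F F' : Finset ℕ} (h : F ⊆ F') :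
    Function.Surjective (Quot.map (ra := fun u v : {x // x ∈ W} => G.adjOn F u.1 v.1)
      (rb := fun u v : {x // x ∈ W} => G.adjOn F' u.1 v.1) id fun _ _ => adjOn_mono h) :=
  Quot.map_surjective _ Function.surjective_id

lemma ncomp_le_of_subset (W : Finset ℕ) {F F' : Finset ℕ} (h : F ⊆ F') :
    G.ncomp W F' ≤ G.ncomp W F :=
  Nat.card_le_card_of_surjective _ (G.surjective_quotMap_of_subset W h)

/-- Equal numbers of components force the quotient map to be injective. -/
lemma reflTransGen_of_ncomp_eq {W F F' : Finset ℕ} (h : F ⊆ F')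
    (heq : G.ncomp W F = G.ncomp W F') {u v : ℕ} (hu : u ∈ W) (hv : v ∈ W)
    (hadj : G.adjOn F' u v) : Relation.ReflTransGen (G.adjOn F) u v := by
  have hinj := ((Nat.bijective_iff_surjective_and_card _).mpr
    ⟨G.surjective_quotMap_of_subset W h, heq⟩).1
  exact G.reflTransGen_of_eqvGen (x := ⟨u, hu⟩) (y := ⟨v, hv⟩)
    (Quot.eqvGen_exact (hinj (Quot.sound hadj)))

lemma reflTransGen_of_not_isBridge {T : Finset ℕ} {e : ℕ} (he : e ∈ G.E \ T)
    (hnb : ¬ G.IsBridge T e) :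
    Relation.ReflTransGen (G.adjOn (G.E \ insert e T)) (G.ends e).2 (G.ends e).1 := by
  have hsub : G.E \ insert e T ⊆ G.E \ T := sdiff_subset_sdiff subset_rfl (subset_insert _ _)
  have heq : G.ncomp G.V (G.E \ insert e T) = G.ncomp G.V (G.E \ T) :=
    le_antisymm (not_lt.mp fun hlt => hnb ⟨he, hlt⟩) (G.ncomp_le_of_subset G.V hsub)
  have hends := G.ends_mem e (mem_sdiff.mp he).1
  exact G.reflTransGen_of_ncomp_eq hsub heq hends.2 hends.1 ⟨e, mem_inter.mpr
    ⟨he, (mem_sdiff.mp he).1⟩, Or.inr rfl⟩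

end Components

section Walks

/-- The dart `(f, true)` runs along `f` from `(G.ends f).1` to `(G.ends f).2`, and `(f, false)`
runs back. -/
def dartSrc (q : ℕ × Bool) : ℕ := if q.2 then (G.ends q.1).1 else (G.ends q.1).2

def dartTgt (q : ℕ × Bool) : ℕ := if q.2 then (G.ends q.1).2 else (G.ends q.1).1

def IsWalk (F : Finset ℕ) : List (ℕ × Bool) → ℕ → ℕ → Prop
  | [], a, b => a = b
  | q :: M, a, b => q.1 ∈ F ∧ G.dartSrc q = a ∧ IsWalk F M (G.dartTgt q) b

variable {G} {F : Finset ℕ}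

@[simp] lemma isWalk_cons {q : ℕ × Bool} {M : List (ℕ × Bool)} {a b : ℕ} :
    G.IsWalk F (q :: M) a b ↔ q.1 ∈ F ∧ G.dartSrc q = a ∧ G.IsWalk F M (G.dartTgt q) b :=
  Iff.rfl

lemma isWalk_append {M₁ M₂ : List (ℕ × Bool)} {a b : ℕ} :
    G.IsWalk F (M₁ ++ M₂) a b ↔ ∃ m, G.IsWalk F M₁ a m ∧ G.IsWalk F M₂ m b := by
  induction M₁ generalizing a with
  | nil => exact ⟨fun h => ⟨a, rfl, h⟩, fun ⟨_, hm, h⟩ => hm ▸ h⟩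
  | cons q M₁ ih =>
    simp only [List.cons_append, isWalk_cons, ih]
    exact ⟨fun ⟨h₁, h₂, m, h₃, h₄⟩ => ⟨m, ⟨h₁, h₂, h₃⟩, h₄⟩,
      fun ⟨m, ⟨h₁, h₂, h₃⟩, h₄⟩ => ⟨h₁, h₂, m, h₃, h₄⟩⟩

lemma IsWalk.mem {M : List (ℕ × Bool)} {a b : ℕ} (h : G.IsWalk F M a b) {q : ℕ × Bool}
    (hq : q ∈ M) : q.1 ∈ F := by
  induction M generalizing a with
  | nil => simp at hq
  | cons r M ih =>
    rcases List.mem_cons.mp hq with rfl | hq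
    exacts [h.1, ih h.2.2 hq]

lemma IsWalk.mono {F' : Finset ℕ} (hF : F ⊆ F') {M : List (ℕ × Bool)} {a b : ℕ}
    (h : G.IsWalk F M a b) : G.IsWalk F' M a b := by
  induction M generalizing a with
  | nil => exact h
  | cons r M ih => exact ⟨hF h.1, h.2.1, ih h.2.2⟩

lemma exists_isWalk_of_reflTransGen {a b : ℕ} (h : Relation.ReflTransGen (G.adjOn F) a b) :
    ∃ M, G.IsWalk F M a b := by
  induction h using Relation.ReflTransGen.head_induction_on with
  | refl => exact ⟨[], rfl⟩
  | head hstep _ ih =>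
    obtain ⟨M, hM⟩ := ih
    obtain ⟨f, hf, hends | hends⟩ := hstep
    · exact ⟨(f, true) :: M, (mem_inter.mp hf).1, by simp [dartSrc, hends],
        by simpa [dartTgt, hends] using hM⟩
    · exact ⟨(f, false) :: M, (mem_inter.mp hf).1, by simp [dartSrc, hends],
        by simpa [dartTgt, hends] using hM⟩

/-- A walk revisiting an edge is shortcut at the second visit: it resumes either at the repeated
dart itself or right after it, depending on the direction of traversal. -/
lemma exists_trail_of_isWalk {M : List (ℕ × Bool)} {a b : ℕ} (h : G.IsWalk F M a b) :
    ∃ M', G.IsWalk F M' a b ∧ (M'.map Prod.fst).Nodup := by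
  induction M generalizing a with
  | nil => exact ⟨[], h, List.nodup_nil⟩
  | cons q M ih =>
    obtain ⟨hqF, rfl, hM⟩ := h
    obtain ⟨M', hM', hnd⟩ := ih hM
    by_cases hq : q.1 ∈ M'.map Prod.fst
    · obtain ⟨r, hr, hrq⟩ := List.mem_map.mp hq
      obtain ⟨B, C, rfl⟩ := List.append_of_mem hr
      obtain ⟨m, -, hrC⟩ := isWalk_append.mp hM'
      have hndC : ((r :: C).map Prod.fst).Nodup :=
        hnd.sublist ((List.sublist_append_right B (r :: C)).map _)
      obtain ⟨hrF, rfl, hC⟩ := hrC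
      obtain ⟨f, d⟩ := q
      obtain ⟨g, d'⟩ := r
      obtain rfl : g = f := hrq
      by_cases hd : d' = d
      · subst hd
        exact ⟨_ :: C, ⟨hrF, rfl, hC⟩, hndC⟩
      · refine ⟨C, ?_, (List.nodup_cons.mp hndC).2⟩
        cases d <;> cases d' <;> simp_all [dartSrc, dartTgt]
    · exact ⟨q :: M', ⟨hqF, rfl, hM'⟩, List.nodup_cons.mpr ⟨hq, hnd⟩⟩

variable (G) in
lemma exists_closedTrail_of_not_isBridge {T : Finset ℕ} {e : ℕ} (he : e ∈ G.E \ T)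
    (hnb : ¬ G.IsBridge T e) :
    ∃ M a, G.IsWalk (G.E \ T) M a a ∧ (M.map Prod.fst).Nodup ∧ e ∈ M.map Prod.fst := by
  obtain ⟨M₀, hM₀⟩ := exists_isWalk_of_reflTransGen (G.reflTransGen_of_not_isBridge he hnb)
  obtain ⟨M, hM, hnd⟩ := exists_trail_of_isWalk hM₀
  have heM : e ∉ M.map Prod.fst := fun hmem => by
    obtain ⟨q, hq, rfl⟩ := List.mem_map.mp hmem
    exact (mem_sdiff.mp (hM.mem hq)).2 (mem_insert_self _ _)
  refine ⟨(e, true) :: M, (G.ends e).1, ⟨he, rfl, ?_⟩, List.nodup_cons.mpr ⟨heM, hnd⟩,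
    List.mem_cons_self⟩
  exact hM.mono (sdiff_subset_sdiff subset_rfl (subset_insert _ _))

lemma exists_dart_leaving (P : ℕ → Prop) {M : List (ℕ × Bool)} {a b : ℕ}
    (h : G.IsWalk F M a b) (ha : P a) (hb : ¬ P b) :
    ∃ q ∈ M, P (G.dartSrc q) ∧ ¬ P (G.dartTgt q) := by
  induction M generalizing a with
  | nil => exact absurd (h ▸ ha) hb
  | cons q M ih =>
    obtain ⟨-, rfl, hM⟩ := h
    by_cases hq : P (G.dartTgt q)
    · obtain ⟨r, hr, hr'⟩ := ih hM hq
      exact ⟨r, List.mem_cons_of_mem _ hr, hr'⟩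
    · exact ⟨q, List.mem_cons_self, ha, hq⟩

lemma exists_dart_leaving_of_closed (P : ℕ → Prop) {M : List (ℕ × Bool)} {a : ℕ}
    (h : G.IsWalk F M a a) {q : ℕ × Bool} (hq : q ∈ M)
    (hcross : P (G.dartSrc q) ↔ ¬ P (G.dartTgt q)) :
    ∃ r ∈ M, P (G.dartSrc r) ∧ ¬ P (G.dartTgt r) := by
  by_cases hs : P (G.dartSrc q)
  · exact ⟨q, hq, hs, hcross.mp hs⟩
  obtain ⟨B, C, rfl⟩ := List.append_of_mem hq
  obtain ⟨m, hB, -, rfl, hC⟩ := isWalk_append.mp h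
  have ht : P (G.dartTgt q) := not_not.mp (mt hcross.mpr hs)
  by_cases ha : P a
  · obtain ⟨r, hr, hr'⟩ := exists_dart_leaving P hB ha hs
    exact ⟨r, List.mem_append_left _ hr, hr'⟩
  · obtain ⟨r, hr, hr'⟩ := exists_dart_leaving P hC ht ha
    exact ⟨r, List.mem_append_right _ (List.mem_cons_of_mem _ hr), hr'⟩

end Walks

section Extension

def UniformExtension (S T : Finset ℕ) (b : ℕ) (σ : Orient) : Prop :=
  ∀ O, G.MemOb S b O → G.MemOb T b (extendBy O σ)

variable {G}

lemma memOb_zero_iff {S : Finset ℕ} {O : Orient} :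
    G.MemOb S 0 O ↔ G.IsOrientOn S O ∧ G.biE O = ∅ ∧ G.TotCyc S O := by
  simp [MemOb]

lemma memOb_one_iff {S : Finset ℕ} {O : Orient} :
    G.MemOb S 1 O ↔ G.IsOrientOn S O ∧ G.Rooted1 S O := by
  simp [MemOb]

lemma IsOrientOn.eq_none {S : Finset ℕ} {O : Orient} (hO : G.IsOrientOn S O)
    (hES : G.E \ S = ∅) : O = fun _ => none :=
  funext fun f => by simpa [hES] using hO f

lemma isOrientOn_extendBy {S T : Finset ℕ} {O σ : Orient} (hO : G.IsOrientOn S O)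
    (hσ : ∀ f, σ f ≠ none ↔ f ∈ S \ T) (hTS : T ⊆ S) (hSE : S ⊆ G.E) :
    G.IsOrientOn T (extendBy O σ) := by
  intro f
  have hf : extendBy O σ f ≠ none ↔ O f ≠ none ∨ σ f ≠ none := by
    simp only [extendBy, ne_eq, Option.or_eq_none_iff, not_and_or]
  rw [hf, hO f, hσ f]
  have := @hTS f
  have := @hSE f
  simp only [mem_sdiff]
  tauto

lemma restr_extendBy {S : Finset ℕ} {O : Orient} (hO : G.IsOrientOn S O) (σ : Orient) :
    restr (extendBy O σ) (G.E \ S) = O := funext fun f => by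
  by_cases hf : f ∈ G.E \ S
  · obtain ⟨x, hx⟩ := Option.ne_none_iff_exists'.mp ((hO f).mpr hf)
    simp [restr, extendBy, hf, hx]
  · simpa [restr, hf, eq_comm] using (hO f).not.mpr hf

lemma biE_extendBy {σ : Orient} (hσ : ∀ f, σ f ≠ some EdgeDir.bi) (O : Orient) :
    G.biE (extendBy O σ) = G.biE O := by
  simp [biE, extendBy, Option.or_eq_some_iff, hσ]

lemma dirT_extendBy_of_pos {O : Orient} {f v : ℕ} {p : ℕ × ℕ} (h : 0 < dirT (O f) p v)
    (σ : Orient) : dirT (extendBy O σ f) p v = dirT (O f) p v := by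
  cases hO : O f with
  | none => simp [hO, dirT] at h
  | some x => simp [extendBy, hO]

lemma dirT_extendBy {S : Finset ℕ} {O : Orient} (hO : G.IsOrientOn S O) (σ : Orient)
    (f v : ℕ) (p : ℕ × ℕ) :
    dirT (extendBy O σ f) p v = dirT (O f) p v + if f ∈ G.E \ S then 0 else dirT (σ f) p v := by
  by_cases hf : f ∈ G.E \ S
  · obtain ⟨x, hx⟩ := Option.ne_none_iff_exists'.mp ((hO f).mpr hf)
    simp [extendBy, hf, hx]
  · have hOf : O f = none := by simpa using (hO f).not.mpr hf
    simp [extendBy, hf, hOf, dirT]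

lemma tOr_extendBy_eq {S : Finset ℕ} {O O' : Orient} (hO : G.IsOrientOn S O)
    (hO' : G.IsOrientOn S O') (σ : Orient) {v : ℕ} (h : G.tOr O v = G.tOr O' v) :
    G.tOr (extendBy O σ) v = G.tOr (extendBy O' σ) v := by
  simp only [tOr, dirT_extendBy hO, dirT_extendBy hO', sum_add_distrib] at h ⊢
  rw [h]

lemma divOr_extendBy_eq {S T : Finset ℕ} {b : ℕ} {O O' : Orient} (hO : G.IsOrientOn S O)
    (hO' : G.IsOrientOn S O') (hdiv : G.divOr S b O = G.divOr S b O') (σ : Orient) :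
    G.divOr T b (extendBy O σ) = G.divOr T b (extendBy O' σ) := by
  by_cases hES : G.E \ S = ∅
  · rw [hO.eq_none hES, hO'.eq_none hES]
  funext v
  by_cases hv : v ∈ G.V
  · have ht : G.tOr O v = G.tOr O' v := by
      have h := congrFun hdiv v
      simp only [divOr, hv, hES, if_true, if_false, add_right_inj] at h
      exact_mod_cast h
    simp only [divOr, tOr_extendBy_eq hO hO' σ ht]
  · simp [divOr, hv]

lemma cutEdges_anti {S S' Z : Finset ℕ} (h : S' ⊆ S) : G.cutEdges S Z ⊆ G.cutEdges S' Z :=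
  filter_subset_filter _ (sdiff_subset_sdiff subset_rfl h)

lemma uniformExtension_refl {S : Finset ℕ} {b : ℕ} :
    G.UniformExtension S S b (fun _ => none) := fun O hO => by
  rwa [show extendBy O (fun _ => none) = O from funext fun _ => Option.or_none]

lemma UniformExtension.trans {S S' T : Finset ℕ} {b : ℕ} {σ τ : Orient}
    (h₁ : G.UniformExtension S S' b σ) (h₂ : G.UniformExtension S' T b τ) :
    G.UniformExtension S T b (extendBy σ τ) := fun O hO => by
  rw [← extendBy_assoc]
  exact h₂ _ (h₁ O hO)

theorem UniformExtension.exists_extension {S T : Finset ℕ} {b : ℕ} {σ OS : Orient}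
    (h : G.UniformExtension S T b σ) (hOS : G.MemOb S b OS) :
    ∃ OT : Orient, G.MemOb T b OT ∧ restr OT (G.E \ S) = OS ∧
      ∀ OS' : Orient, G.MemOb S b OS' → G.equivOr S b OS OS' →
        ∃ OT' : Orient, G.MemOb T b OT' ∧ restr OT' (G.E \ S) = OS' ∧
          G.equivOr T b OT OT' :=
  ⟨extendBy OS σ, h OS hOS, restr_extendBy hOS.1 σ, fun OS' hOS' hequiv =>
    ⟨extendBy OS' σ, h OS' hOS', restr_extendBy hOS'.1 σ, (h OS hOS).1, (h OS' hOS').1,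
      divOr_extendBy_eq hOS.1 hOS'.1 hequiv.2.2 σ⟩⟩

end Extension

section Bridgeless

variable {G}

lemma cross_iff_dart (q : ℕ × Bool) (Z : Finset ℕ) :
    ((G.ends q.1).1 ∈ Z ∧ (G.ends q.1).2 ∉ Z ∨ (G.ends q.1).1 ∉ Z ∧ (G.ends q.1).2 ∈ Z) ↔
      (G.dartSrc q ∈ Z ↔ G.dartTgt q ∉ Z) := by
  obtain ⟨f, _ | _⟩ := q <;> simp only [dartSrc, dartTgt] <;> simp <;> tauto

lemma dartTgt_mem {q : ℕ × Bool} (hq : q.1 ∈ G.E) : G.dartTgt q ∈ G.V := by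
  obtain ⟨f, _ | _⟩ := q
  exacts [(G.ends_mem f hq).1, (G.ends_mem f hq).2]

lemma dirT_dartTgt_pos (q : ℕ × Bool) :
    0 < dirT (some (dartDir q.2)) (G.ends q.1) (G.dartTgt q) := by
  obtain ⟨f, _ | _⟩ := q <;> simp [dirT, dartDir, dartTgt]

lemma orientAlong_ne_none_iff {M : List (ℕ × Bool)} {f : ℕ} :
    orientAlong M f ≠ none ↔ f ∈ M.map Prod.fst := by
  have hmem : f ∈ M.map Prod.fst ↔ (f, true) ∈ M ∨ (f, false) ∈ M := by
    refine ⟨fun h => ?_, fun h => h.elim (List.mem_map_of_mem ·) (List.mem_map_of_mem ·)⟩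
    obtain ⟨⟨g, _ | _⟩, hg, rfl⟩ := List.mem_map.mp h
    exacts [Or.inr hg, Or.inl hg]
  rw [hmem]
  unfold orientAlong
  split_ifs <;> simp_all

lemma mem_cutEdges_of_dart {S Z : Finset ℕ} {O : Orient} {M : List (ℕ × Bool)} {a : ℕ}
    (hO : G.IsOrientOn S O) (hM : G.IsWalk G.E M a a) (hnd : (M.map Prod.fst).Nodup)
    (hS : G.cutEdges S Z = ∅) {q : ℕ × Bool} (hq : q ∈ M)
    (hcross : G.dartSrc q ∈ Z ↔ G.dartTgt q ∉ Z) :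
    q.1 ∈ G.cutEdges (S \ (M.map Prod.fst).toFinset) Z ∧
      0 < dirT (extendBy O (restr (orientAlong M) S) q.1) (G.ends q.1) (G.dartTgt q) := by
  have hqE := hM.mem hq
  have hqS : q.1 ∈ S := by
    by_contra hqS
    have : q.1 ∈ G.cutEdges S Z :=
      mem_filter.mpr ⟨mem_sdiff.mpr ⟨hqE, hqS⟩, (cross_iff_dart q Z).mpr hcross⟩
    simp [hS] at this
  have hOq : O q.1 = none := by simpa [hqS] using (hO q.1).not
  refine ⟨mem_filter.mpr ⟨mem_sdiff.mpr ⟨hqE, fun h => (mem_sdiff.mp h).2 ?_⟩,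
    (cross_iff_dart q Z).mpr hcross⟩, ?_⟩
  · exact List.mem_toFinset.mpr (List.mem_map_of_mem hq)
  · rw [extendBy, hOq, Option.none_or, restr, if_pos hqS, orientAlong_of_mem hnd hq]
    exact dirT_dartTgt_pos q

lemma totCyc_extendBy_orientAlong {S : Finset ℕ} {O : Orient} {M : List (ℕ × Bool)} {a : ℕ}
    (hO : G.IsOrientOn S O) (htc : G.TotCyc S O) (hM : G.IsWalk G.E M a a)
    (hnd : (M.map Prod.fst).Nodup) :
    G.TotCyc (S \ (M.map Prod.fst).toFinset) (extendBy O (restr (orientAlong M) S)) := by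
  intro Z hZV hZne hZV' hcut
  by_cases hcutS : (G.cutEdges S Z).Nonempty
  · obtain ⟨⟨f, hf, v, hv, hd⟩, ⟨f', hf', v', hv', hd'⟩⟩ := htc Z hZV hZne hZV' hcutS
    exact ⟨⟨f, cutEdges_anti sdiff_subset hf, v, hv, by rwa [dirT_extendBy_of_pos hd]⟩,
      ⟨f', cutEdges_anti sdiff_subset hf', v', hv', by rwa [dirT_extendBy_of_pos hd']⟩⟩
  have hS : G.cutEdges S Z = ∅ := not_nonempty_iff_eq_empty.mp hcutS
  obtain ⟨f₀, hf₀⟩ := hcut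
  obtain ⟨hf₀E, hf₀Z⟩ := mem_filter.mp hf₀
  have hf₀M : f₀ ∈ M.map Prod.fst := by
    by_contra hf₀M
    have hf₀S : f₀ ∉ S := fun hf₀S =>
      (mem_sdiff.mp hf₀E).2 (mem_sdiff.mpr ⟨hf₀S, mt List.mem_toFinset.mp hf₀M⟩)
    have : f₀ ∈ G.cutEdges S Z := mem_filter.mpr ⟨mem_sdiff.mpr ⟨(mem_sdiff.mp hf₀E).1, hf₀S⟩, hf₀Z⟩
    simp [hS] at this
  obtain ⟨q, hq, rfl⟩ := List.mem_map.mp hf₀M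
  have hcross := (cross_iff_dart q Z).mp hf₀Z
  obtain ⟨r, hr, hrs, hrt⟩ := exists_dart_leaving_of_closed (· ∉ Z) hM hq (by tauto)
  obtain ⟨r', hr', hr's, hr't⟩ := exists_dart_leaving_of_closed (· ∈ Z) hM hq hcross
  obtain ⟨hrcut, hrpos⟩ := mem_cutEdges_of_dart hO hM hnd hS hr (by tauto)
  obtain ⟨hr'cut, hr'pos⟩ := mem_cutEdges_of_dart hO hM hnd hS hr' (by tauto)
  exact ⟨⟨r.1, hrcut, _, not_not.mp hrt, hrpos⟩,
    ⟨r'.1, hr'cut, _, mem_sdiff.mpr ⟨dartTgt_mem (hM.mem hr'), hr't⟩, hr'pos⟩⟩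

lemma uniformExtension_zero_of_closedTrail {S : Finset ℕ} {M : List (ℕ × Bool)} {a : ℕ}
    (hSE : S ⊆ G.E) (hM : G.IsWalk G.E M a a) (hnd : (M.map Prod.fst).Nodup) :
    G.UniformExtension S (S \ (M.map Prod.fst).toFinset) 0 (restr (orientAlong M) S) := by
  intro O hO
  obtain ⟨hOr, hbi, htc⟩ := memOb_zero_iff.mp hO
  refine memOb_zero_iff.mpr ⟨isOrientOn_extendBy hOr (fun f => ?_) sdiff_subset hSE, ?_,
    totCyc_extendBy_orientAlong hOr htc hM hnd⟩
  · by_cases hf : f ∈ S <;> simp [restr, hf, orientAlong_ne_none_iff]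
  · rw [biE_extendBy (fun f => ?_) O, hbi]
    simp only [restr, orientAlong]
    split_ifs <;> simp

variable (G) in
lemma exists_uniformExtension_zero {T : Finset ℕ} (hT : ∀ e, ¬ G.IsBridge T e) {S : Finset ℕ}
    (hTS : T ⊆ S) (hSE : S ⊆ G.E) : ∃ σ, G.UniformExtension S T 0 σ := by
  induction hn : (S \ T).card using Nat.strong_induction_on generalizing S with
  | _ n ih =>
  obtain hST | ⟨e, he⟩ := (S \ T).eq_empty_or_nonempty
  · obtain rfl : S = T := (sdiff_eq_empty_iff_subset.mp hST).antisymm hTS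
    exact ⟨_, uniformExtension_refl⟩
  obtain ⟨heS, heT⟩ := mem_sdiff.mp he
  obtain ⟨M, a, hM, hnd, heM⟩ :=
    G.exists_closedTrail_of_not_isBridge (mem_sdiff.mpr ⟨hSE heS, heT⟩) (hT e)
  have hTS' : T ⊆ S \ (M.map Prod.fst).toFinset := fun f hf => mem_sdiff.mpr ⟨hTS hf, fun hfM => by
    obtain ⟨q, hq, rfl⟩ := List.mem_map.mp (List.mem_toFinset.mp hfM)
    exact (mem_sdiff.mp (hM.mem hq)).2 hf⟩
  have hlt : ((S \ (M.map Prod.fst).toFinset) \ T).card < n := by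
    rw [← hn]
    refine card_lt_card ((ssubset_iff_of_subset (sdiff_subset_sdiff sdiff_subset subset_rfl)).mpr
      ⟨e, he, fun h => ?_⟩)
    exact (mem_sdiff.mp (mem_sdiff.mp h).1).2 (List.mem_toFinset.mpr heM)
  obtain ⟨τ, hτ⟩ := ih _ hlt hTS' (sdiff_subset.trans hSE) rfl
  exact ⟨_, (uniformExtension_zero_of_closedTrail hSE (hM.mono sdiff_subset) hnd).trans hτ⟩

end Bridgeless

section Rooted

variable {G}

lemma rootedAt_extendBy {S T : Finset ℕ} {O : Orient} {e₀ : ℕ} (hTS : T ⊆ S)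
    (he₀ : e₀ ∈ G.E \ S) (h : G.RootedAt S O e₀) (σ : Orient) :
    G.RootedAt T (extendBy O σ) e₀ := by
  intro Z hZV hZV' hind
  obtain ⟨f, hf, v, hv, hd⟩ := h Z hZV hZV' (mem_filter.mpr ⟨he₀, (mem_filter.mp hind).2⟩)
  exact ⟨f, cutEdges_anti hTS hf, v, hv, by rwa [dirT_extendBy_of_pos hd]⟩

lemma rootedAt_of_card_eq_one (hV : G.V.card = 1) (S : Finset ℕ) (O : Orient) (e₀ : ℕ) :
    G.RootedAt S O e₀ := by
  intro Z hZV hZV' hind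
  obtain ⟨x, hx⟩ := card_eq_one.mp hV
  obtain rfl : Z = ∅ :=
    (subset_singleton_iff.mp (hx ▸ hZV)).resolve_right fun h => hZV' (h.trans hx.symm)
  simp [indEdges] at hind

lemma exists_uniformExtension_one_of_card_eq_one {S T : Finset ℕ} (hES : G.E \ S = ∅)
    (hV : G.V.card = 1) (hTS : T ⊆ S) (hSE : S ⊆ G.E) : ∃ σ, G.UniformExtension S T 1 σ := by
  obtain hST | ⟨e₀, he₀⟩ := (S \ T).eq_empty_or_nonempty
  · refine ⟨fun _ => none, fun O hO => ?_⟩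
    have hET : G.E \ T = ∅ := subset_empty.mp fun f hf => by
      obtain ⟨hfE, hfT⟩ := mem_sdiff.mp hf
      by_cases hfS : f ∈ S
      · exact hST ▸ mem_sdiff.mpr ⟨hfS, hfT⟩
      · exact hES ▸ mem_sdiff.mpr ⟨hfE, hfS⟩
    exact memOb_one_iff.mpr ⟨isOrientOn_extendBy (memOb_one_iff.mp hO).1 (by simp [hST]) hTS hSE,
      Or.inr ⟨hET, hV⟩⟩
  · refine ⟨restr (fun f => some (if f = e₀ then EdgeDir.bi else EdgeDir.fwd)) (S \ T),
      fun O hO => ?_⟩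
    have hOr := (memOb_one_iff.mp hO).1
    refine memOb_one_iff.mpr ⟨isOrientOn_extendBy hOr (by simp [restr]) hTS hSE,
      Or.inl ⟨e₀, ?_, rootedAt_of_card_eq_one hV _ _ _⟩⟩
    rw [hOr.eq_none hES]
    ext f
    have := hSE (mem_sdiff.mp he₀).1
    by_cases hf : f = e₀ <;> simp_all [biE, extendBy, restr]

variable (G) in
lemma exists_uniformExtension_one {S T : Finset ℕ} (hTS : T ⊆ S) (hSE : S ⊆ G.E) :
    ∃ σ, G.UniformExtension S T 1 σ := by
  by_cases hdeg : G.E \ S = ∅ ∧ G.V.card = 1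
  · exact exists_uniformExtension_one_of_card_eq_one hdeg.1 hdeg.2 hTS hSE
  refine ⟨restr (fun _ => some EdgeDir.fwd) (S \ T), fun O hO => ?_⟩
  obtain ⟨hOr, hR⟩ := memOb_one_iff.mp hO
  obtain ⟨e₀, hbi, hroot⟩ := hR.resolve_right hdeg
  have he₀ : e₀ ∈ G.E \ S := (hOr e₀).mp (by simp [(mem_filter.mp (hbi ▸ mem_singleton_self e₀)).2])
  refine memOb_one_iff.mpr ⟨isOrientOn_extendBy hOr (by simp [restr]) hTS hSE,
    Or.inl ⟨e₀, ?_, rootedAt_extendBy hTS he₀ hroot _⟩⟩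
  rw [biE_extendBy (fun f => by simp only [restr]; split_ifs <;> simp) O, hbi]

end Rooted

end WGraph

/-- For `S, T ∈ A^b_G` with `T ⊆ S`, every
`O_S ∈ 𝒪^b(G−S)` extends to some `O_T ∈ 𝒪^b(G−T)`; moreover if
`O_S ∼ O'_S` with `O'_S ∈ 𝒪^b(G−S)`, then `O'_S` extends to some
`O'_T ∈ 𝒪^b(G−T)` with `O'_T ∼ O_T`. -/
theorem orientation_extension (G : WGraph) (b : ℕ) (hb : b = 0 ∨ b = 1)
    (S T : Finset ℕ) (hS : G.Ab b S) (hT : G.Ab b T) (hTS : T ⊆ S)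
    (OS : Orient) (hOS : G.MemOb S b OS) :
    ∃ OT : Orient, G.MemOb T b OT ∧ restr OT (G.E \ S) = OS ∧
      ∀ OS' : Orient, G.MemOb S b OS' → G.equivOr S b OS OS' →
        ∃ OT' : Orient, G.MemOb T b OT' ∧ restr OT' (G.E \ S) = OS' ∧
          G.equivOr T b OT OT' := by
  obtain ⟨σ, hσ⟩ : ∃ σ, G.UniformExtension S T b σ := by
    rcases hb with rfl | rfl
    · have hTb : ∀ e, ¬ G.IsBridge T e := by
        rcases hT.2 with ⟨-, h⟩ | ⟨h, -⟩
        exacts [h, absurd h zero_ne_one]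
      exact G.exists_uniformExtension_zero hTb hTS hS.1
    · exact G.exists_uniformExtension_one hTS hS.1
  exact hσ.exists_extension hOS
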